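/- arXiv:0811.4523 — 5 statements merged into one kernel-verified Lean document; each statement's English description precedes it below -/
import Mathlib

section
/- The rational function d(C) = C(5C+22)/(10−C) takes a positive integer value at exactly 21 positive rational values of C, namely C ∈ {2/5, 1, 2, 14/5, 4, 5, 26/5, 6, 32/5, 34/5, 7, 38/5, 8, 41/5, 42/5, 44/5, 9, 46/5, 47/5, 48/5, 49/5}. -/
/-!
If `d(C) = n` with `n` a positive integer, then `C < 10` and `m = 5C` is a root of the monic
integer quadratic `X² + (n + 22)X - 50n`, hence an integer by the rational root theorem.
From `m(m + 22) = n(50 - m)` and `m(m + 22) ≡ 50 · 72 [ZMOD 50 - m]` we get `50 - m ∣ 3600`,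
which leaves the 21 values `m = 50 - k` for the divisors `k < 50` of `3600`.
-/

open Polynomial in
theorem Rat.exists_int_eq_of_sq_add_mul_add_eq_zero {q : ℚ} (b c : ℤ)
    (h : q ^ 2 + b * q + c = 0) : ∃ m : ℤ, q = m := by
  have hmonic : (X ^ 2 + C b * X + C c : ℤ[X]).Monic := by monicity!
  obtain ⟨m, hm⟩ := isInteger_of_is_root_of_monic hmonic (K := ℚ) (r := q) (by simpa using h)
  exact ⟨m, by simpa using hm.symm⟩

theorem exists_int_of_div_eq_pos_int {C : ℚ} {n : ℤ} (hC : 0 < C) (hn : 0 < n)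
    (h : C * (5 * C + 22) / (10 - C) = n) :
    ∃ m : ℤ, 0 < m ∧ m < 50 ∧ 50 - m ∣ 3600 ∧ C = m / 5 := by
  have hden : 0 < 10 - C :=
    (div_pos_iff_of_pos_left (by positivity)).mp (h ▸ Int.cast_pos.mpr hn)
  have hquad : C * (5 * C + 22) = n * (10 - C) := (div_eq_iff hden.ne').mp h
  obtain ⟨m, hm⟩ := Rat.exists_int_eq_of_sq_add_mul_add_eq_zero (q := 5 * C) (n + 22) (-50 * n)
    (by push_cast; linear_combination 5 * hquad)
  have hmn : m * (m + 22) = n * (50 - m) := by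
    qify; rw [← hm]; linear_combination 5 * hquad
  refine ⟨m, ?_, ?_, ⟨n + m + 72, by linear_combination hmn⟩, by rw [← hm]; ring⟩
  · qify; rw [← hm]; positivity
  · qify; rw [← hm]; linarith

/-- The rational function `d(C) = C(5C+22)/(10-C)` takes a positive integer value at
exactly 21 positive rational values of `C`. -/
theorem deligne_dimension_values (C : ℚ) (hC : 0 < C) :
    (∃ n : ℤ, 0 < n ∧ C * (5 * C + 22) / (10 - C) = (n : ℚ)) ↔
      C ∈ ({2/5, 1, 2, 14/5, 4, 5, 26/5, 6, 32/5, 34/5, 7, 38/5, 8, 41/5, 42/5,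
        44/5, 9, 46/5, 47/5, 48/5, 49/5} : Set ℚ) := by
  simp only [Set.mem_insert_iff, Set.mem_singleton_iff]
  constructor
  · rintro ⟨n, hn, h⟩
    obtain ⟨m, hm0, hm50, hdvd, rfl⟩ := exists_int_of_div_eq_pos_int hC hn h
    interval_cases m <;> first | omega | norm_num
  · intro h
    refine ⟨⌊C * (5 * C + 22) / (10 - C)⌋, ?_⟩
    rcases h with rfl | rfl | rfl | rfl | rfl | rfl | rfl | rfl | rfl | rfl | rfl | rfl | rfl |
      rfl | rfl | rfl | rfl | rfl | rfl | rfl | rfl <;> norm_num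
end

section
/- For all rational C ∉ {10, 22}, with d = C(5C+22)/(10−C), Y(C) = 5(5C+22)(C−1)(C+2)²/(2(C−22)(C−10)), and Y*(C) = Y(−2d/C) (assuming C ≠ 0 and −2d/C ∉ {10,22}), one has 1 + Y(C) + Y*(C) = d(d+1)/2. -/
/-- The dimension of `Y` as a function of the central charge. -/
noncomputable def dimY (C : ℚ) : ℚ :=
  5 * (5 * C + 22) * (C - 1) * (C + 2)^2 / (2 * (C - 22) * (C - 10))

/-- The conjugate central charge `C* = -2d/C`, with `d/C = (5C+22)/(10-C)` substituted. -/
noncomputable def conjugateCharge (C : ℚ) : ℚ :=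
  (10 * C + 44) / (C - 10)

lemma neg_two_mul_div_eq_conjugateCharge {C : ℚ} (hC0 : C ≠ 0) (hC10 : C ≠ 10) :
    -2 * (C * (5 * C + 22) / (10 - C)) / C = conjugateCharge C := by
  have h10 : (10 : ℚ) - C ≠ 0 := sub_ne_zero.mpr (Ne.symm hC10)
  have h10' : C - 10 ≠ 0 := sub_ne_zero.mpr hC10
  unfold conjugateCharge
  field_simp
  ring

lemma conjugateCharge_sub_ten {C : ℚ} (hC10 : C ≠ 10) :
    conjugateCharge C - 10 = 144 / (C - 10) := by
  unfold conjugateCharge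
  field_simp [sub_ne_zero.mpr hC10]
  ring

lemma conjugateCharge_sub_twentytwo {C : ℚ} (hC10 : C ≠ 10) :
    conjugateCharge C - 22 = -12 * (C - 22) / (C - 10) := by
  unfold conjugateCharge
  field_simp [sub_ne_zero.mpr hC10]
  ring

lemma dimY_conjugateCharge {C : ℚ} (hC10 : C ≠ 10) (hC22 : C ≠ 22) :
    dimY (conjugateCharge C) = -135 * C * (C + 6) * (C + 2)^2 / ((C - 10)^2 * (C - 22)) := by
  have h10 : C - 10 ≠ 0 := sub_ne_zero.mpr hC10
  have h22 : C - 22 ≠ 0 := sub_ne_zero.mpr hC22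
  unfold dimY
  rw [conjugateCharge_sub_ten hC10, conjugateCharge_sub_twentytwo hC10]
  unfold conjugateCharge
  field_simp
  ring

theorem sym_square_decomposition_general (C : ℚ) (hC0 : C ≠ 0) (hC10 : C ≠ 10) (hC22 : C ≠ 22)
    (d : ℚ) (hd : d = C * (5 * C + 22) / (10 - C)) :
    1 + dimY C + dimY (-2 * d / C) = d * (d + 1) / 2 := by
  rw [hd, neg_two_mul_div_eq_conjugateCharge hC0 hC10, dimY_conjugateCharge hC10 hC22]
  have h10 : (10 : ℚ) - C ≠ 0 := sub_ne_zero.mpr (Ne.symm hC10)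
  have h10' : C - 10 ≠ 0 := sub_ne_zero.mpr hC10
  have h22 : C - 22 ≠ 0 := sub_ne_zero.mpr hC22
  unfold dimY
  field_simp
  ring

/-- `Sym(g ⊗ g) = 1 ⊕ Y ⊕ Y*` at the level of dimensions:
`1 + Y(C) + Y(C*) = d(d+1)/2` with `d = C(5C+22)/(10-C)` and `C* = -2d/C`. -/
theorem sym_square_decomposition (C : ℚ) (hC0 : C ≠ 0) (hC10 : C ≠ 10) (hC22 : C ≠ 22)
    (d : ℚ) (hd : d = C * (5 * C + 22) / (10 - C))
    (h10 : -2 * d / C ≠ 10) (h22 : -2 * d / C ≠ 22) :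
    1 + dimY C + dimY (-2 * d / C) = d * (d + 1) / 2 :=
  sym_square_decomposition_general C hC0 hC10 hC22 d hd
end

section
/- The rational function p₂(C) = (5C+22)(2C−1)(7C+68)/(2(C²−55C+748)) takes a positive integer value at exactly 37 rational values of C, namely C ∈ {−44/5, 8, 52/5, 16, 132/7, 20, 102/5, 748/35, 43/2, 22, 808/35, 47/2, 24, 170/7, 49/2, 172/7, 152/5, 61/2, 154/5, 220/7, 63/2, 32, 164/5, 236/7, 34, 242/7, 36, 40, 204/5, 44, 109/2, 428/7, 68, 484/7, 187/2, 132, 1496}. -/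
set_option maxRecDepth 100000

def sqrtGo : ℕ → ℕ → ℕ
  | 0, _ => 0
  | f+1, n =>
    if (2 * sqrtGo f (n/4) + 1) * (2 * sqrtGo f (n/4) + 1) ≤ n then 2 * sqrtGo f (n/4) + 1
    else 2 * sqrtGo f (n/4)

theorem sqrtGo_le (f : ℕ) : ∀ n : ℕ, n < 4^f →
    sqrtGo f n * sqrtGo f n ≤ n ∧ n < (sqrtGo f n + 1) * (sqrtGo f n + 1) := by
  induction f with
  | zero =>
    intro n h
    have hn : n = 0 := by simpa using h
    subst hn
    simp [sqrtGo]
  | succ f ih =>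
    intro n h
    have h4 : n / 4 < 4 ^ f := by
      have h5 : (4:ℕ)^(f+1) = 4 * 4^f := by ring
      omega
    obtain ⟨ih1, ih2⟩ := ih (n/4) h4
    have hd1 : 4 * (n/4) ≤ n := by omega
    have hd2 : n < 4 * (n/4) + 4 := by omega
    simp only [sqrtGo]
    set q := sqrtGo f (n/4) with hq
    split_ifs with hif
    · exact ⟨hif, by nlinarith⟩
    · exact ⟨by nlinarith, Nat.lt_of_not_le hif⟩

theorem sqrtGo_eq (m n : ℕ) (h : n = m * m) (hb : n < 4^18) : sqrtGo 18 n = m := by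
  obtain ⟨h1, h2⟩ := sqrtGo_le 18 n hb
  subst h
  rcases lt_trichotomy (sqrtGo 18 (m*m)) m with hlt | he | hgt
  · exfalso; nlinarith
  · exact he
  · exfalso; nlinarith

def pairs2 : List (ℤ × ℕ) := [(-88,5),(16,1),(104,5),(32,1),(264,7),(40,1),(204,5),(1496,35),(86,2),(44,1),(1616,35),(94,2),(48,1),(340,7),(98,2),(344,7),(304,5),(122,2),(308,5),(440,7),(126,2),(64,1),(328,5),(472,7),(68,1),(484,7),(72,1),(80,1),(408,5),(88,1),(218,2),(856,7),(136,1),(968,7),(374,2),(264,1),(2992,1)]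

set_option maxRecDepth 100000 in
set_option maxHeartbeats 4000000 in
theorem check : ∀ b ∈ ([1,2,5,7,10,14,35,70] : List ℕ),
    ∀ x2 ∈ ([1,2,4,8,16,32,64,128,256] : List ℕ),
    ∀ x3 ∈ ([1,3] : List ℕ), ∀ x11 ∈ ([1,11] : List ℕ), ∀ x17 ∈ ([1,17] : List ℕ),
    ∀ x31 ∈ ([1,31,961] : List ℕ), ∀ x37 ∈ ([1,37] : List ℕ),
    ∀ ε ∈ ([1,-1] : List ℤ), ∀ σ ∈ ([1,-1] : List ℤ),
    ∀ d ∈ ([ε * ((x2*x3*x11*x17*x31*x37 : ℕ) : ℤ)] : List ℤ),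
    ∀ s ∈ ([sqrtGo 18 (4*d+33*(b:ℤ)^2).toNat] : List ℕ),
    ∀ u ∈ ([55*(b:ℤ)+σ*(s:ℕ)] : List ℤ),
    ((s:ℤ)*(s:ℤ) = 4*d+33*(b:ℤ)^2) → (2 ∣ u) → (Int.gcd (u/2) (b:ℤ) = 1) →
    (8*(b:ℤ)*d ∣ (5*u+44*(b:ℤ))*(u-(b:ℤ))*(7*u+136*(b:ℤ))) →
    (0 < (5*u+44*(b:ℤ))*(u-(b:ℤ))*(7*u+136*(b:ℤ))*d) →
    (u, b) ∈ pairs2 := by decide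

theorem mem70 : ∀ m : ℕ, m ≤ 70 → m ∣ 70 → m ∈ ([1,2,5,7,10,14,35,70] : List ℕ) := by decide
theorem mem256 : ∀ m : ℕ, m ≤ 256 → m ∣ 256 → m ∈ ([1,2,4,8,16,32,64,128,256] : List ℕ) := by decide
theorem mem3 : ∀ m : ℕ, m ≤ 3 → m ∣ 3 → m ∈ ([1,3] : List ℕ) := by decide
theorem mem11 : ∀ m : ℕ, m ≤ 11 → m ∣ 11 → m ∈ ([1,11] : List ℕ) := by decide
theorem mem17 : ∀ m : ℕ, m ≤ 17 → m ∣ 17 → m ∈ ([1,17] : List ℕ) := by decide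
theorem mem961 : ∀ m : ℕ, m ≤ 961 → m ∣ 961 → m ∈ ([1,31,961] : List ℕ) := by decide
theorem mem37 : ∀ m : ℕ, m ≤ 37 → m ∣ 37 → m ∈ ([1,37] : List ℕ) := by decide

set_option maxHeartbeats 4000000 in
/-- The rational function `p₂(C) = (5C+22)(2C-1)(7C+68)/(2(C²-55C+748))` takes a
positive integer value at exactly 37 rational values of `C`. -/
theorem p2_positive_integer_values (C : ℚ) :
    (∃ n : ℤ, 0 < n ∧
        (5 * C + 22) * (2 * C - 1) * (7 * C + 68) / (2 * (C^2 - 55 * C + 748)) = (n : ℚ)) ↔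
      C ∈ ({-44/5, 8, 52/5, 16, 132/7, 20, 102/5, 748/35, 43/2, 22, 808/35, 47/2, 24,
        170/7, 49/2, 172/7, 152/5, 61/2, 154/5, 220/7, 63/2, 32, 164/5, 236/7, 34,
        242/7, 36, 40, 204/5, 44, 109/2, 428/7, 68, 484/7, 187/2, 132, 1496} : Set ℚ) := by
  constructor
  · rintro ⟨n, hn, heq⟩
    have hbQ : ((C.den : ℕ) : ℚ) ≠ 0 := Nat.cast_ne_zero.mpr C.den_nz
    have hb0 : (0:ℤ) < (C.den : ℤ) := Int.natCast_pos.mpr (Nat.pos_of_ne_zero C.den_nz)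
    -- the denominator is nonzero
    have hden : (C^2 - 55*C + 748 : ℚ) ≠ 0 := by
      intro h
      rw [h, mul_zero, div_zero] at heq
      have : n = 0 := by exact_mod_cast heq.symm
      omega
    have heq' : (5*C+22)*(2*C-1)*(7*C+68) = (n:ℚ) * (2*(C^2-55*C+748)) := by
      rw [div_eq_iff (mul_ne_zero two_ne_zero hden)] at heq
      linear_combination heq
    have hnum : ((C.num : ℤ) : ℚ) = C * ((C.den : ℕ) : ℚ) := by
      have h := Rat.num_div_den C
      rw [div_eq_iff hbQ] at h
      exact h
    -- the cleared-denominator integer equation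
    have key : (5*C.num+22*(C.den:ℤ))*(2*C.num-(C.den:ℤ))*(7*C.num+68*(C.den:ℤ))
        = 2*n*(C.den:ℤ)*(C.num^2-55*C.num*(C.den:ℤ)+748*(C.den:ℤ)^2) := by
      have h2 : ((5*(C.num:ℤ)+22*((C.den:ℕ):ℤ))*(2*(C.num:ℤ)-((C.den:ℕ):ℤ))*(7*(C.num:ℤ)+68*((C.den:ℕ):ℤ)) : ℚ)
          = ((2*n*((C.den:ℕ):ℤ)*((C.num:ℤ)^2-55*(C.num:ℤ)*((C.den:ℕ):ℤ)+748*((C.den:ℕ):ℤ)^2) : ℤ) : ℚ) := by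
        push_cast
        rw [hnum]
        linear_combination (((C.den:ℕ):ℚ))^3 * heq'
      exact_mod_cast h2
    obtain ⟨d, hd⟩ : ∃ d : ℤ, d = C.num^2-55*C.num*(C.den:ℤ)+748*(C.den:ℤ)^2 := ⟨_, rfl⟩
    have hg : Int.gcd C.num (C.den:ℤ) = 1 := C.reduced
    have hco : IsCoprime (C.num) ((C.den:ℤ)) := Int.isCoprime_iff_gcd_eq_one.mpr hg
    -- d ≠ 0
    have hDQ : ((d : ℤ) : ℚ) = ((C.den:ℕ):ℚ)^2 * (C^2-55*C+748) := by
      rw [hd]; push_cast; rw [hnum]; ring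
    have hd0 : d ≠ 0 := by
      intro h
      rw [h] at hDQ
      exact (mul_ne_zero (pow_ne_zero 2 hbQ) hden) (by exact_mod_cast hDQ.symm)
    -- C.den divides 70
    have h701 : (C.den:ℤ) ∣ 70 * C.num^3 :=
      ⟨2*n*(C.num^2-55*C.num*(C.den:ℤ)+748*(C.den:ℤ)^2)
        - (953*C.num^2 + 2498*C.num*(C.den:ℤ) - 1496*(C.den:ℤ)^2), by linear_combination key⟩
    have h70 : (C.den:ℤ) ∣ 70 := (hco.symm.pow_right).dvd_of_dvd_mul_right h701
    have hden70 : C.den ∣ 70 := by exact_mod_cast h70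
    -- d divides 5106554112
    have hdb : IsCoprime d ((C.den:ℤ)) := by
      have h2 := (hco.mul_left hco).add_mul_left_left (748*(C.den:ℤ) - 55*C.num)
      have e : C.num*C.num + (C.den:ℤ)*(748*(C.den:ℤ) - 55*C.num) = d := by rw [hd]; ring
      rwa [e] at h2
    have hPdvd : d ∣ (5*C.num+22*(C.den:ℤ))*(2*C.num-(C.den:ℤ))*(7*C.num+68*(C.den:ℤ)) :=
      ⟨2*n*(C.den:ℤ), by rw [hd]; linear_combination key⟩
    obtain ⟨k0, hk0⟩ := hPdvd
    have hM : d ∣ 961*(223*C.num - 3740*(C.den:ℤ)) := by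
      have h1 : d ∣ (961*(223*C.num - 3740*(C.den:ℤ))) * (C.den:ℤ)^2 :=
        ⟨k0 - (70*C.num+4803*(C.den:ℤ)), by rw [hd] at hk0 ⊢; linear_combination hk0⟩
      exact (hdb.pow_right).dvd_of_dvd_mul_right h1
    obtain ⟨k1, hk1⟩ := hM
    have hM2 : d ∣ 961*(8525*C.num - 166804*(C.den:ℤ)) := by
      have h1 : d ∣ (961*(8525*C.num - 166804*(C.den:ℤ))) * (C.den:ℤ) :=
        ⟨C.num*k1 - 961*223, by rw [hd] at hk1 ⊢; linear_combination C.num*hk1⟩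
      exact hdb.dvd_of_dvd_mul_right h1
    obtain ⟨k2, hk2⟩ := hM2
    have hV : d ∣ 5106554112 := by
      have h1 : d ∣ (5106554112 : ℤ) * (C.den:ℤ) :=
        ⟨8525*k1 - 223*k2, by linear_combination 8525*hk1 - 223*hk2⟩
      exact hdb.dvd_of_dvd_mul_right h1
    have hna : d.natAbs ∣ 5106554112 := by
      have h := Int.natAbs_dvd_natAbs.mpr hV
      simpa using h
    -- decompose d.natAbs into prime power factors
    have hna' : d.natAbs ∣ 256 * 19947477 := by rwa [show (256*19947477 : ℕ) = 5106554112 from by norm_num]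
    obtain ⟨x2, r1, hx2, hr1, he1⟩ := Nat.dvd_mul.mp hna'
    have hr1x : r1 ∣ 3 * 6649159 := by rwa [show ((3:ℕ) * 6649159) = 19947477 from by norm_num]
    obtain ⟨x3, r2, hx3, hr2, he2⟩ := Nat.dvd_mul.mp hr1x
    have hr2x : r2 ∣ 11 * 604469 := by rwa [show ((11:ℕ) * 604469) = 6649159 from by norm_num]
    obtain ⟨x11, r3, hx11, hr3, he3⟩ := Nat.dvd_mul.mp hr2x
    have hr3x : r3 ∣ 17 * 35557 := by rwa [show ((17:ℕ) * 35557) = 604469 from by norm_num]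
    obtain ⟨x17, r4, hx17, hr4, he4⟩ := Nat.dvd_mul.mp hr3x
    have hr4x : r4 ∣ 961 * 37 := by rwa [show ((961:ℕ) * 37) = 35557 from by norm_num]
    obtain ⟨x31, x37, hx31, hx37, he5⟩ := Nat.dvd_mul.mp hr4x
    have hdeq : d.natAbs = x2*(x3*(x11*(x17*(x31*x37)))) := by
      rw [he5, he4, he3, he2, he1]
    -- bounds
    have hdle : d.natAbs ≤ 5106554112 := Nat.le_of_dvd (by norm_num) hna
    have hble : (C.den:ℤ) ≤ 70 := Int.le_of_dvd (by norm_num) h70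
    have hB2 : ((C.den:ℤ))^2 ≤ 4900 := by
      calc ((C.den:ℤ))^2 ≤ 70^2 := pow_le_pow_left₀ hb0.le hble 2
        _ = 4900 := by norm_num
    -- square root bookkeeping
    obtain ⟨s0, hs0⟩ : ∃ s0 : ℕ, s0 = (2*C.num-55*(C.den:ℤ)).natAbs := ⟨_, rfl⟩
    have ht : (2*C.num-55*(C.den:ℤ))*(2*C.num-55*(C.den:ℤ)) = 4*d + 33*(C.den:ℤ)^2 := by
      rw [hd]; ring
    have hs2 : ((s0:ℕ):ℤ)*((s0:ℕ):ℤ) = 4*d + 33*((C.den:ℕ):ℤ)^2 := by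
      rw [hs0]
      rw [Int.natAbs_mul_self']
      exact ht
    have hNt : (4*d + 33*((C.den:ℕ):ℤ)^2).toNat = s0*s0 := by
      have h1 : (4*d + 33*((C.den:ℕ):ℤ)^2) = ((s0*s0 : ℕ) : ℤ) := by push_cast; linarith only [hs2]
      rw [h1, Int.toNat_natCast]
    have hsslt : s0*s0 < 4^18 := by
      have h1 : d ≤ 5106554112 :=
        le_trans Int.le_natAbs (by exact_mod_cast hdle)
      have h2 : ((s0*s0:ℕ):ℤ) ≤ 20426378148 := by
        push_cast
        rw [hs2]
        linarith only [h1, hB2]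
      have h3 : (s0*s0:ℕ) ≤ 20426378148 := by exact_mod_cast h2
      exact lt_of_le_of_lt h3 (by norm_num)
    have hsqrt : sqrtGo 18 ((4*d + 33*((C.den:ℕ):ℤ)^2).toNat) = s0 := by
      rw [hNt]; exact sqrtGo_eq s0 _ rfl hsslt
    -- conditions for check
    have hcond2 : (2:ℤ) ∣ 2*C.num := ⟨C.num, rfl⟩
    have hcond3 : Int.gcd ((2*C.num)/2) ((C.den:ℕ):ℤ) = 1 := by
      rw [Int.mul_ediv_cancel_left _ (two_ne_zero)]
      exact hg
    have hcond4 : 8*((C.den:ℕ):ℤ)*d ∣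
        (5*(2*C.num)+44*((C.den:ℕ):ℤ))*((2*C.num)-((C.den:ℕ):ℤ))*(7*(2*C.num)+136*((C.den:ℕ):ℤ)) :=
      ⟨n, by rw [hd]; linear_combination (4:ℤ)*key⟩
    have hcond5 : 0 < (5*(2*C.num)+44*((C.den:ℕ):ℤ))*((2*C.num)-((C.den:ℕ):ℤ))*(7*(2*C.num)+136*((C.den:ℕ):ℤ))*d := by
      have hQd : (5*(2*C.num)+44*((C.den:ℕ):ℤ))*((2*C.num)-((C.den:ℕ):ℤ))*(7*(2*C.num)+136*((C.den:ℕ):ℤ))*d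
          = 8*n*((C.den:ℕ):ℤ)*(d*d) := by
        rw [hd]; linear_combination (4*(C.num^2-55*C.num*(C.den:ℤ)+748*(C.den:ℤ)^2))*key
      rw [hQd]
      exact mul_pos (mul_pos (mul_pos (by norm_num) hn) hb0) (mul_self_pos.mpr hd0)
    -- memberships for check
    have hbmem : C.den ∈ ([1,2,5,7,10,14,35,70] : List ℕ) :=
      mem70 _ (Nat.le_of_dvd (by norm_num) hden70) hden70
    have hx2m : x2 ∈ ([1,2,4,8,16,32,64,128,256] : List ℕ) := mem256 _ (Nat.le_of_dvd (by norm_num) hx2) hx2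
    have hx3m : x3 ∈ ([1,3] : List ℕ) := mem3 _ (Nat.le_of_dvd (by norm_num) hx3) hx3
    have hx11m : x11 ∈ ([1,11] : List ℕ) := mem11 _ (Nat.le_of_dvd (by norm_num) hx11) hx11
    have hx17m : x17 ∈ ([1,17] : List ℕ) := mem17 _ (Nat.le_of_dvd (by norm_num) hx17) hx17
    have hx31m : x31 ∈ ([1,31,961] : List ℕ) := mem961 _ (Nat.le_of_dvd (by norm_num) hx31) hx31
    have hx37m : x37 ∈ ([1,37] : List ℕ) := mem37 _ (Nat.le_of_dvd (by norm_num) hx37) hx37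
    have hmem : (2*C.num, C.den) ∈ pairs2 := by
      rcases Int.natAbs_eq d with hsd | hsd
      · rcases le_or_gt 0 (2*C.num-55*(C.den:ℤ)) with hts | hts
        · have hst : ((s0:ℕ):ℤ) = 2*C.num-55*(C.den:ℤ) := by rw [hs0]; exact Int.natAbs_of_nonneg hts
          exact check C.den hbmem x2 hx2m x3 hx3m x11 hx11m x17 hx17m x31 hx31m x37 hx37m
            1 (by norm_num) 1 (by norm_num)
            d (List.mem_singleton.mpr (by rw [hsd, hdeq]; push_cast; ring))
            s0 (List.mem_singleton.mpr hsqrt.symm)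
            (2*C.num) (List.mem_singleton.mpr (by rw [hst]; ring))
            hs2 hcond2 hcond3 hcond4 hcond5
        · have hst : ((s0:ℕ):ℤ) = -(2*C.num-55*(C.den:ℤ)) := by
            rw [hs0, ← Int.natAbs_neg]; exact Int.natAbs_of_nonneg (by omega)
          exact check C.den hbmem x2 hx2m x3 hx3m x11 hx11m x17 hx17m x31 hx31m x37 hx37m
            1 (by norm_num) (-1) (by norm_num)
            d (List.mem_singleton.mpr (by rw [hsd, hdeq]; push_cast; ring))
            s0 (List.mem_singleton.mpr hsqrt.symm)
            (2*C.num) (List.mem_singleton.mpr (by rw [hst]; ring))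
            hs2 hcond2 hcond3 hcond4 hcond5
      · rcases le_or_gt 0 (2*C.num-55*(C.den:ℤ)) with hts | hts
        · have hst : ((s0:ℕ):ℤ) = 2*C.num-55*(C.den:ℤ) := by rw [hs0]; exact Int.natAbs_of_nonneg hts
          exact check C.den hbmem x2 hx2m x3 hx3m x11 hx11m x17 hx17m x31 hx31m x37 hx37m
            (-1) (by norm_num) 1 (by norm_num)
            d (List.mem_singleton.mpr (by rw [hsd, hdeq]; push_cast; ring))
            s0 (List.mem_singleton.mpr hsqrt.symm)
            (2*C.num) (List.mem_singleton.mpr (by rw [hst]; ring))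
            hs2 hcond2 hcond3 hcond4 hcond5
        · have hst : ((s0:ℕ):ℤ) = -(2*C.num-55*(C.den:ℤ)) := by
            rw [hs0, ← Int.natAbs_neg]; exact Int.natAbs_of_nonneg (by omega)
          exact check C.den hbmem x2 hx2m x3 hx3m x11 hx11m x17 hx17m x31 hx31m x37 hx37m
            (-1) (by norm_num) (-1) (by norm_num)
            d (List.mem_singleton.mpr (by rw [hsd, hdeq]; push_cast; ring))
            s0 (List.mem_singleton.mpr hsqrt.symm)
            (2*C.num) (List.mem_singleton.mpr (by rw [hst]; ring))
            hs2 hcond2 hcond3 hcond4 hcond5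
    clear * - hmem
    simp only [pairs2, List.mem_cons, List.not_mem_nil, or_false, Prod.mk.injEq] at hmem
    simp only [Set.mem_insert_iff, Set.mem_singleton_iff]
    rcases hmem with ⟨h1,h2⟩|⟨h1,h2⟩|⟨h1,h2⟩|⟨h1,h2⟩|⟨h1,h2⟩|⟨h1,h2⟩|⟨h1,h2⟩|⟨h1,h2⟩|⟨h1,h2⟩|⟨h1,h2⟩|⟨h1,h2⟩|⟨h1,h2⟩|⟨h1,h2⟩|⟨h1,h2⟩|⟨h1,h2⟩|⟨h1,h2⟩|⟨h1,h2⟩|⟨h1,h2⟩|⟨h1,h2⟩|⟨h1,h2⟩|⟨h1,h2⟩|⟨h1,h2⟩|⟨h1,h2⟩|⟨h1,h2⟩|⟨h1,h2⟩|⟨h1,h2⟩|⟨h1,h2⟩|⟨h1,h2⟩|⟨h1,h2⟩|⟨h1,h2⟩|⟨h1,h2⟩|⟨h1,h2⟩|⟨h1,h2⟩|⟨h1,h2⟩|⟨h1,h2⟩|⟨h1,h2⟩|⟨h1,h2⟩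
    · have hC : C = -44/5 := by
        have h := (Rat.num_div_den C).symm
        rw [show C.num = -44 from by omega, show C.den = 5 from by omega] at h
        rw [h]; norm_num
      exact Or.inl hC
    · have hC : C = 8 := by
        have h := (Rat.num_div_den C).symm
        rw [show C.num = 8 from by omega, show C.den = 1 from by omega] at h
        rw [h]; norm_num
      exact Or.inr (Or.inl hC)
    · have hC : C = 52/5 := by
        have h := (Rat.num_div_den C).symm
        rw [show C.num = 52 from by omega, show C.den = 5 from by omega] at h
        rw [h]; norm_num
      exact Or.inr (Or.inr (Or.inl hC))
    · have hC : C = 16 := by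
        have h := (Rat.num_div_den C).symm
        rw [show C.num = 16 from by omega, show C.den = 1 from by omega] at h
        rw [h]; norm_num
      exact Or.inr (Or.inr (Or.inr (Or.inl hC)))
    · have hC : C = 132/7 := by
        have h := (Rat.num_div_den C).symm
        rw [show C.num = 132 from by omega, show C.den = 7 from by omega] at h
        rw [h]; norm_num
      exact Or.inr (Or.inr (Or.inr (Or.inr (Or.inl hC))))
    · have hC : C = 20 := by
        have h := (Rat.num_div_den C).symm
        rw [show C.num = 20 from by omega, show C.den = 1 from by omega] at h
        rw [h]; norm_num
      exact Or.inr (Or.inr (Or.inr (Or.inr (Or.inr (Or.inl hC)))))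
    · have hC : C = 102/5 := by
        have h := (Rat.num_div_den C).symm
        rw [show C.num = 102 from by omega, show C.den = 5 from by omega] at h
        rw [h]; norm_num
      exact Or.inr (Or.inr (Or.inr (Or.inr (Or.inr (Or.inr (Or.inl hC))))))
    · have hC : C = 748/35 := by
        have h := (Rat.num_div_den C).symm
        rw [show C.num = 748 from by omega, show C.den = 35 from by omega] at h
        rw [h]; norm_num
      exact Or.inr (Or.inr (Or.inr (Or.inr (Or.inr (Or.inr (Or.inr (Or.inl hC)))))))
    · have hC : C = 43/2 := by
        have h := (Rat.num_div_den C).symm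
        rw [show C.num = 43 from by omega, show C.den = 2 from by omega] at h
        rw [h]; norm_num
      exact Or.inr (Or.inr (Or.inr (Or.inr (Or.inr (Or.inr (Or.inr (Or.inr (Or.inl hC))))))))
    · have hC : C = 22 := by
        have h := (Rat.num_div_den C).symm
        rw [show C.num = 22 from by omega, show C.den = 1 from by omega] at h
        rw [h]; norm_num
      exact Or.inr (Or.inr (Or.inr (Or.inr (Or.inr (Or.inr (Or.inr (Or.inr (Or.inr (Or.inl hC)))))))))
    · have hC : C = 808/35 := by
        have h := (Rat.num_div_den C).symm
        rw [show C.num = 808 from by omega, show C.den = 35 from by omega] at h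
        rw [h]; norm_num
      exact Or.inr (Or.inr (Or.inr (Or.inr (Or.inr (Or.inr (Or.inr (Or.inr (Or.inr (Or.inr (Or.inl hC))))))))))
    · have hC : C = 47/2 := by
        have h := (Rat.num_div_den C).symm
        rw [show C.num = 47 from by omega, show C.den = 2 from by omega] at h
        rw [h]; norm_num
      exact Or.inr (Or.inr (Or.inr (Or.inr (Or.inr (Or.inr (Or.inr (Or.inr (Or.inr (Or.inr (Or.inr (Or.inl hC)))))))))))
    · have hC : C = 24 := by
        have h := (Rat.num_div_den C).symm
        rw [show C.num = 24 from by omega, show C.den = 1 from by omega] at h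
        rw [h]; norm_num
      exact Or.inr (Or.inr (Or.inr (Or.inr (Or.inr (Or.inr (Or.inr (Or.inr (Or.inr (Or.inr (Or.inr (Or.inr (Or.inl hC))))))))))))
    · have hC : C = 170/7 := by
        have h := (Rat.num_div_den C).symm
        rw [show C.num = 170 from by omega, show C.den = 7 from by omega] at h
        rw [h]; norm_num
      exact Or.inr (Or.inr (Or.inr (Or.inr (Or.inr (Or.inr (Or.inr (Or.inr (Or.inr (Or.inr (Or.inr (Or.inr (Or.inr (Or.inl hC)))))))))))))
    · have hC : C = 49/2 := by
        have h := (Rat.num_div_den C).symm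
        rw [show C.num = 49 from by omega, show C.den = 2 from by omega] at h
        rw [h]; norm_num
      exact Or.inr (Or.inr (Or.inr (Or.inr (Or.inr (Or.inr (Or.inr (Or.inr (Or.inr (Or.inr (Or.inr (Or.inr (Or.inr (Or.inr (Or.inl hC))))))))))))))
    · have hC : C = 172/7 := by
        have h := (Rat.num_div_den C).symm
        rw [show C.num = 172 from by omega, show C.den = 7 from by omega] at h
        rw [h]; norm_num
      exact Or.inr (Or.inr (Or.inr (Or.inr (Or.inr (Or.inr (Or.inr (Or.inr (Or.inr (Or.inr (Or.inr (Or.inr (Or.inr (Or.inr (Or.inr (Or.inl hC)))))))))))))))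
    · have hC : C = 152/5 := by
        have h := (Rat.num_div_den C).symm
        rw [show C.num = 152 from by omega, show C.den = 5 from by omega] at h
        rw [h]; norm_num
      exact Or.inr (Or.inr (Or.inr (Or.inr (Or.inr (Or.inr (Or.inr (Or.inr (Or.inr (Or.inr (Or.inr (Or.inr (Or.inr (Or.inr (Or.inr (Or.inr (Or.inl hC))))))))))))))))
    · have hC : C = 61/2 := by
        have h := (Rat.num_div_den C).symm
        rw [show C.num = 61 from by omega, show C.den = 2 from by omega] at h
        rw [h]; norm_num
      exact Or.inr (Or.inr (Or.inr (Or.inr (Or.inr (Or.inr (Or.inr (Or.inr (Or.inr (Or.inr (Or.inr (Or.inr (Or.inr (Or.inr (Or.inr (Or.inr (Or.inr (Or.inl hC)))))))))))))))))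
    · have hC : C = 154/5 := by
        have h := (Rat.num_div_den C).symm
        rw [show C.num = 154 from by omega, show C.den = 5 from by omega] at h
        rw [h]; norm_num
      exact Or.inr (Or.inr (Or.inr (Or.inr (Or.inr (Or.inr (Or.inr (Or.inr (Or.inr (Or.inr (Or.inr (Or.inr (Or.inr (Or.inr (Or.inr (Or.inr (Or.inr (Or.inr (Or.inl hC))))))))))))))))))
    · have hC : C = 220/7 := by
        have h := (Rat.num_div_den C).symm
        rw [show C.num = 220 from by omega, show C.den = 7 from by omega] at h
        rw [h]; norm_num
      exact Or.inr (Or.inr (Or.inr (Or.inr (Or.inr (Or.inr (Or.inr (Or.inr (Or.inr (Or.inr (Or.inr (Or.inr (Or.inr (Or.inr (Or.inr (Or.inr (Or.inr (Or.inr (Or.inr (Or.inl hC)))))))))))))))))))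
    · have hC : C = 63/2 := by
        have h := (Rat.num_div_den C).symm
        rw [show C.num = 63 from by omega, show C.den = 2 from by omega] at h
        rw [h]; norm_num
      exact Or.inr (Or.inr (Or.inr (Or.inr (Or.inr (Or.inr (Or.inr (Or.inr (Or.inr (Or.inr (Or.inr (Or.inr (Or.inr (Or.inr (Or.inr (Or.inr (Or.inr (Or.inr (Or.inr (Or.inr (Or.inl hC))))))))))))))))))))
    · have hC : C = 32 := by
        have h := (Rat.num_div_den C).symm
        rw [show C.num = 32 from by omega, show C.den = 1 from by omega] at h
        rw [h]; norm_num
      exact Or.inr (Or.inr (Or.inr (Or.inr (Or.inr (Or.inr (Or.inr (Or.inr (Or.inr (Or.inr (Or.inr (Or.inr (Or.inr (Or.inr (Or.inr (Or.inr (Or.inr (Or.inr (Or.inr (Or.inr (Or.inr (Or.inl hC)))))))))))))))))))))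
    · have hC : C = 164/5 := by
        have h := (Rat.num_div_den C).symm
        rw [show C.num = 164 from by omega, show C.den = 5 from by omega] at h
        rw [h]; norm_num
      exact Or.inr (Or.inr (Or.inr (Or.inr (Or.inr (Or.inr (Or.inr (Or.inr (Or.inr (Or.inr (Or.inr (Or.inr (Or.inr (Or.inr (Or.inr (Or.inr (Or.inr (Or.inr (Or.inr (Or.inr (Or.inr (Or.inr (Or.inl hC))))))))))))))))))))))
    · have hC : C = 236/7 := by
        have h := (Rat.num_div_den C).symm
        rw [show C.num = 236 from by omega, show C.den = 7 from by omega] at h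
        rw [h]; norm_num
      exact Or.inr (Or.inr (Or.inr (Or.inr (Or.inr (Or.inr (Or.inr (Or.inr (Or.inr (Or.inr (Or.inr (Or.inr (Or.inr (Or.inr (Or.inr (Or.inr (Or.inr (Or.inr (Or.inr (Or.inr (Or.inr (Or.inr (Or.inr (Or.inl hC)))))))))))))))))))))))
    · have hC : C = 34 := by
        have h := (Rat.num_div_den C).symm
        rw [show C.num = 34 from by omega, show C.den = 1 from by omega] at h
        rw [h]; norm_num
      exact Or.inr (Or.inr (Or.inr (Or.inr (Or.inr (Or.inr (Or.inr (Or.inr (Or.inr (Or.inr (Or.inr (Or.inr (Or.inr (Or.inr (Or.inr (Or.inr (Or.inr (Or.inr (Or.inr (Or.inr (Or.inr (Or.inr (Or.inr (Or.inr (Or.inl hC))))))))))))))))))))))))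
    · have hC : C = 242/7 := by
        have h := (Rat.num_div_den C).symm
        rw [show C.num = 242 from by omega, show C.den = 7 from by omega] at h
        rw [h]; norm_num
      exact Or.inr (Or.inr (Or.inr (Or.inr (Or.inr (Or.inr (Or.inr (Or.inr (Or.inr (Or.inr (Or.inr (Or.inr (Or.inr (Or.inr (Or.inr (Or.inr (Or.inr (Or.inr (Or.inr (Or.inr (Or.inr (Or.inr (Or.inr (Or.inr (Or.inr (Or.inl hC)))))))))))))))))))))))))
    · have hC : C = 36 := by
        have h := (Rat.num_div_den C).symm
        rw [show C.num = 36 from by omega, show C.den = 1 from by omega] at h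
        rw [h]; norm_num
      exact Or.inr (Or.inr (Or.inr (Or.inr (Or.inr (Or.inr (Or.inr (Or.inr (Or.inr (Or.inr (Or.inr (Or.inr (Or.inr (Or.inr (Or.inr (Or.inr (Or.inr (Or.inr (Or.inr (Or.inr (Or.inr (Or.inr (Or.inr (Or.inr (Or.inr (Or.inr (Or.inl hC))))))))))))))))))))))))))
    · have hC : C = 40 := by
        have h := (Rat.num_div_den C).symm
        rw [show C.num = 40 from by omega, show C.den = 1 from by omega] at h
        rw [h]; norm_num
      exact Or.inr (Or.inr (Or.inr (Or.inr (Or.inr (Or.inr (Or.inr (Or.inr (Or.inr (Or.inr (Or.inr (Or.inr (Or.inr (Or.inr (Or.inr (Or.inr (Or.inr (Or.inr (Or.inr (Or.inr (Or.inr (Or.inr (Or.inr (Or.inr (Or.inr (Or.inr (Or.inr (Or.inl hC)))))))))))))))))))))))))))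
    · have hC : C = 204/5 := by
        have h := (Rat.num_div_den C).symm
        rw [show C.num = 204 from by omega, show C.den = 5 from by omega] at h
        rw [h]; norm_num
      exact Or.inr (Or.inr (Or.inr (Or.inr (Or.inr (Or.inr (Or.inr (Or.inr (Or.inr (Or.inr (Or.inr (Or.inr (Or.inr (Or.inr (Or.inr (Or.inr (Or.inr (Or.inr (Or.inr (Or.inr (Or.inr (Or.inr (Or.inr (Or.inr (Or.inr (Or.inr (Or.inr (Or.inr (Or.inl hC))))))))))))))))))))))))))))
    · have hC : C = 44 := by
        have h := (Rat.num_div_den C).symm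
        rw [show C.num = 44 from by omega, show C.den = 1 from by omega] at h
        rw [h]; norm_num
      exact Or.inr (Or.inr (Or.inr (Or.inr (Or.inr (Or.inr (Or.inr (Or.inr (Or.inr (Or.inr (Or.inr (Or.inr (Or.inr (Or.inr (Or.inr (Or.inr (Or.inr (Or.inr (Or.inr (Or.inr (Or.inr (Or.inr (Or.inr (Or.inr (Or.inr (Or.inr (Or.inr (Or.inr (Or.inr (Or.inl hC)))))))))))))))))))))))))))))
    · have hC : C = 109/2 := by
        have h := (Rat.num_div_den C).symm
        rw [show C.num = 109 from by omega, show C.den = 2 from by omega] at h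
        rw [h]; norm_num
      exact Or.inr (Or.inr (Or.inr (Or.inr (Or.inr (Or.inr (Or.inr (Or.inr (Or.inr (Or.inr (Or.inr (Or.inr (Or.inr (Or.inr (Or.inr (Or.inr (Or.inr (Or.inr (Or.inr (Or.inr (Or.inr (Or.inr (Or.inr (Or.inr (Or.inr (Or.inr (Or.inr (Or.inr (Or.inr (Or.inr (Or.inl hC))))))))))))))))))))))))))))))
    · have hC : C = 428/7 := by
        have h := (Rat.num_div_den C).symm
        rw [show C.num = 428 from by omega, show C.den = 7 from by omega] at h
        rw [h]; norm_num
      exact Or.inr (Or.inr (Or.inr (Or.inr (Or.inr (Or.inr (Or.inr (Or.inr (Or.inr (Or.inr (Or.inr (Or.inr (Or.inr (Or.inr (Or.inr (Or.inr (Or.inr (Or.inr (Or.inr (Or.inr (Or.inr (Or.inr (Or.inr (Or.inr (Or.inr (Or.inr (Or.inr (Or.inr (Or.inr (Or.inr (Or.inr (Or.inl hC)))))))))))))))))))))))))))))))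
    · have hC : C = 68 := by
        have h := (Rat.num_div_den C).symm
        rw [show C.num = 68 from by omega, show C.den = 1 from by omega] at h
        rw [h]; norm_num
      exact Or.inr (Or.inr (Or.inr (Or.inr (Or.inr (Or.inr (Or.inr (Or.inr (Or.inr (Or.inr (Or.inr (Or.inr (Or.inr (Or.inr (Or.inr (Or.inr (Or.inr (Or.inr (Or.inr (Or.inr (Or.inr (Or.inr (Or.inr (Or.inr (Or.inr (Or.inr (Or.inr (Or.inr (Or.inr (Or.inr (Or.inr (Or.inr (Or.inl hC))))))))))))))))))))))))))))))))
    · have hC : C = 484/7 := by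
        have h := (Rat.num_div_den C).symm
        rw [show C.num = 484 from by omega, show C.den = 7 from by omega] at h
        rw [h]; norm_num
      exact Or.inr (Or.inr (Or.inr (Or.inr (Or.inr (Or.inr (Or.inr (Or.inr (Or.inr (Or.inr (Or.inr (Or.inr (Or.inr (Or.inr (Or.inr (Or.inr (Or.inr (Or.inr (Or.inr (Or.inr (Or.inr (Or.inr (Or.inr (Or.inr (Or.inr (Or.inr (Or.inr (Or.inr (Or.inr (Or.inr (Or.inr (Or.inr (Or.inr (Or.inl hC)))))))))))))))))))))))))))))))))
    · have hC : C = 187/2 := by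
        have h := (Rat.num_div_den C).symm
        rw [show C.num = 187 from by omega, show C.den = 2 from by omega] at h
        rw [h]; norm_num
      exact Or.inr (Or.inr (Or.inr (Or.inr (Or.inr (Or.inr (Or.inr (Or.inr (Or.inr (Or.inr (Or.inr (Or.inr (Or.inr (Or.inr (Or.inr (Or.inr (Or.inr (Or.inr (Or.inr (Or.inr (Or.inr (Or.inr (Or.inr (Or.inr (Or.inr (Or.inr (Or.inr (Or.inr (Or.inr (Or.inr (Or.inr (Or.inr (Or.inr (Or.inr (Or.inl hC))))))))))))))))))))))))))))))))))
    · have hC : C = 132 := by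
        have h := (Rat.num_div_den C).symm
        rw [show C.num = 132 from by omega, show C.den = 1 from by omega] at h
        rw [h]; norm_num
      exact Or.inr (Or.inr (Or.inr (Or.inr (Or.inr (Or.inr (Or.inr (Or.inr (Or.inr (Or.inr (Or.inr (Or.inr (Or.inr (Or.inr (Or.inr (Or.inr (Or.inr (Or.inr (Or.inr (Or.inr (Or.inr (Or.inr (Or.inr (Or.inr (Or.inr (Or.inr (Or.inr (Or.inr (Or.inr (Or.inr (Or.inr (Or.inr (Or.inr (Or.inr (Or.inr (Or.inl hC)))))))))))))))))))))))))))))))))))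
    · have hC : C = 1496 := by
        have h := (Rat.num_div_den C).symm
        rw [show C.num = 1496 from by omega, show C.den = 1 from by omega] at h
        rw [h]; norm_num
      exact Or.inr (Or.inr (Or.inr (Or.inr (Or.inr (Or.inr (Or.inr (Or.inr (Or.inr (Or.inr (Or.inr (Or.inr (Or.inr (Or.inr (Or.inr (Or.inr (Or.inr (Or.inr (Or.inr (Or.inr (Or.inr (Or.inr (Or.inr (Or.inr (Or.inr (Or.inr (Or.inr (Or.inr (Or.inr (Or.inr (Or.inr (Or.inr (Or.inr (Or.inr (Or.inr (Or.inr hC)))))))))))))))))))))))))))))))))))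
  · intro h
    simp only [Set.mem_insert_iff, Set.mem_singleton_iff] at h
    rcases h with h|h|h|h|h|h|h|h|h|h|h|h|h|h|h|h|h|h|h|h|h|h|h|h|h|h|h|h|h|h|h|h|h|h|h|h|h
    · exact ⟨1, by norm_num, by rw [h]; norm_num⟩
    · exact ⟨155, by norm_num, by rw [h]; norm_num⟩
    · exact ⟨363, by norm_num, by rw [h]; norm_num⟩
    · exact ⟨2295, by norm_num, by rw [h]; norm_num⟩
    · exact ⟨6425, by norm_num, by rw [h]; norm_num⟩
    · exact ⟨10309, by norm_num, by rw [h]; norm_num⟩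
    · exact ⟨12338, by norm_num, by rw [h]; norm_num⟩
    · exact ⟨19967, by norm_num, by rw [h]; norm_num⟩
    · exact ⟨21413, by norm_num, by rw [h]; norm_num⟩
    · exact ⟨28638, by norm_num, by rw [h]; norm_num⟩
    · exact ⟨63427, by norm_num, by rw [h]; norm_num⟩
    · exact ⟨96255, by norm_num, by rw [h]; norm_num⟩
    · exact ⟨196883, by norm_num, by rw [h]; norm_num⟩
    · exact ⟨390054, by norm_num, by rw [h]; norm_num⟩
    · exact ⟨1107448, by norm_num, by rw [h]; norm_num⟩
    · exact ⟨2562885, by norm_num, by rw [h]; norm_num⟩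
    · exact ⟨9130563, by norm_num, by rw [h]; norm_num⟩
    · exact ⟨1964870, by norm_num, by rw [h]; norm_num⟩
    · exact ⟨572872, by norm_num, by rw [h]; norm_num⟩
    · exact ⟨222129, by norm_num, by rw [h]; norm_num⟩
    · exact ⟨207143, by norm_num, by rw [h]; norm_num⟩
    · exact ⟨139503, by norm_num, by rw [h]; norm_num⟩
    · exact ⟨90117, by norm_num, by rw [h]; norm_num⟩
    · exact ⟨63365, by norm_num, by rw [h]; norm_num⟩
    · exact ⟨57888, by norm_num, by rw [h]; norm_num⟩
    · exact ⟨49290, by norm_num, by rw [h]; norm_num⟩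
    · exact ⟨35855, by norm_num, by rw [h]; norm_num⟩
    · exact ⟨20619, by norm_num, by rw [h]; norm_num⟩
    · exact ⟨19097, by norm_num, by rw [h]; norm_num⟩
    · exact ⟨14993, by norm_num, by rw [h]; norm_num⟩
    · exact ⟨9918, by norm_num, by rw [h]; norm_num⟩
    · exact ⟨8773, by norm_num, by rw [h]; norm_num⟩
    · exact ⟨8145, by norm_num, by rw [h]; norm_num⟩
    · exact ⟨8073, by norm_num, by rw [h]; norm_num⟩
    · exact ⟨7565, by norm_num, by rw [h]; norm_num⟩
    · exact ⟨8153, by norm_num, by rw [h]; norm_num⟩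
    · exact ⟨54835, by norm_num, by rw [h]; norm_num⟩
end

section
/- If Z(q) = q^{−C/24}·Σ_{n≥0} aₙqⁿ with a₀ = 1 is a formal power series solution of [θ² + 2E₂(q)θ − (5/4)C(C+4)E₄(q)]Z = 0 with θ = q d/dq, E₂ = −1/12 + 2Σ_{n≥1} σ₁(n)qⁿ, E₄ = 1/720 + (1/3)Σ_{n≥1} σ₃(n)qⁿ, then a₁ = C(5C+22)/(10−C), provided C ≠ 10. -/
/-- Coefficients of the Eisenstein series `E₂ = -1/12 + 2∑σ₁(n)qⁿ`. -/
def e2 (n : ℕ) : ℚ :=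
  if n = 0 then -1/12 else 2 * ∑ d ∈ n.divisors, (d : ℚ)

/-- Coefficients of the Eisenstein series `E₄ = 1/720 + (1/3)∑σ₃(n)qⁿ`. -/
def e4 (n : ℕ) : ℚ :=
  if n = 0 then 1/720 else (1/3) * ∑ d ∈ n.divisors, (d : ℚ)^3

/-- The coefficient equations for `Z(q) = q^{-C/24} ∑ aₙ qⁿ` to solve the ODE
`[θ² + 2E₂θ - (5/4)C(C+4)E₄] Z = 0` with `θ = q d/dq`: for every `n`,
`(n - C/24)² aₙ + 2 ∑_{k≤n} e₂(k)(n-k-C/24)a_{n-k} - (5/4)C(C+4) ∑_{k≤n} e₄(k)a_{n-k} = 0`. -/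
def SolvesODE (C : ℚ) (a : ℕ → ℚ) : Prop :=
  ∀ n : ℕ,
    ((n : ℚ) - C/24)^2 * a n
      + 2 * ∑ k ∈ Finset.range (n + 1), e2 k * (((n : ℚ) - (k : ℚ)) - C/24) * a (n - k)
      - (5/4) * C * (C + 4) * ∑ k ∈ Finset.range (n + 1), e4 k * a (n - k) = 0

@[simp] lemma e2_zero : e2 0 = -1/12 := rfl

@[simp] lemma e4_zero : e4 0 = 1/720 := rfl

@[simp] lemma e2_one : e2 1 = 2 := by simp [e2]

@[simp] lemma e4_one : e4 1 = 1/3 := by simp [e4]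

/-- The constant terms of `E₂` and `E₄` make `-C/24` a root of the indicial equation, which is why
the `aₙ` terms collapse to `n (12n - C - 2)/12 · aₙ`. -/
theorem SolvesODE.recurrence {C : ℚ} {a : ℕ → ℚ} (h : SolvesODE C a) (n : ℕ) :
    n * (12 * n - C - 2) / 12 * a n =
      ∑ k ∈ Finset.range n,
        ((5/4) * C * (C + 4) * e4 (k + 1) - 2 * e2 (k + 1) * ((n : ℚ) - (k + 1 : ℕ) - C/24))
          * a (n - (k + 1)) := by
  have hn := h n
  rw [Finset.sum_range_succ', Finset.sum_range_succ'] at hn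
  simp only [e2_zero, e4_zero, Nat.cast_zero, sub_zero, Nat.sub_zero, sub_mul,
    Finset.sum_sub_distrib, mul_assoc, ← Finset.mul_sum] at hn ⊢
  linear_combination hn

/-- If `Z(q) = q^{-C/24} ∑ aₙ qⁿ` with `a₀ = 1` solves the ODE, then
`a₁ = C(5C+22)/(10-C)`, provided `C ≠ 10`. -/
theorem a1_deligne_formula (C : ℚ) (hC : C ≠ 10) (a : ℕ → ℚ)
    (h0 : a 0 = 1) (h : SolvesODE C a) :
    a 1 = C * (5 * C + 22) / (10 - C) := by
  have h1 := h.recurrence 1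
  simp only [Finset.sum_range_one, zero_add, e2_one, e4_one, h0, Nat.cast_one, sub_self] at h1
  rw [eq_div_iff (sub_ne_zero.mpr hC.symm)]
  linear_combination 12 * h1
end

section
/- If Z(q) = q^{−C/24}·(1 + a₁q + a₂q² + …) solves the second-order equation [θ² + 2E₂θ − (5/4)C(C+4)E₄]Z = 0 (with the Eisenstein normalizations E₂ = −1/12 + 2Σσ₁(n)qⁿ, E₄ = 1/720 + (1/3)Σσ₃(n)qⁿ), then a₂ − 1 − a₁ = 5(5C+22)(C−1)(C+2)²/(2(C−22)(C−10)) for C ∉ {10, 22}. -/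
@[simp] lemma e2_two : e2 2 = 6 := by
  norm_num [e2, show Nat.divisors 2 = {1, 2} from rfl]

@[simp] lemma e4_two : e4 2 = 3 := by
  norm_num [e4, show Nat.divisors 2 = {1, 2} from rfl]

namespace SolvesODE

variable {C : ℚ} {a : ℕ → ℚ}

lemma sub_mul_coeff_one (h : SolvesODE C a) :
    (10 - C) * a 1 = C * (5 * C + 22) * a 0 := by
  have h1 := h 1
  simp only [Finset.sum_range_succ, Finset.sum_range_zero] at h1
  norm_num at h1
  linear_combination 12 * h1

lemma sub_mul_coeff_two (h : SolvesODE C a) :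
    (22 - C) * a 2 =
      (3 * C + 45/2 * C * (C + 4)) * a 0 - (24 - C - 5/2 * C * (C + 4)) * a 1 := by
  have h2 := h 2
  simp only [Finset.sum_range_succ, Finset.sum_range_zero] at h2
  norm_num at h2
  linear_combination 6 * h2

end SolvesODE

/-- If `Z(q) = q^{-C/24}(1 + a₁q + a₂q² + …)` solves the ODE, then
`a₂ - 1 - a₁ = 5(5C+22)(C-1)(C+2)²/(2(C-22)(C-10))` for `C ∉ {10, 22}`. -/
theorem a2_dimY_formula (C : ℚ) (hC10 : C ≠ 10) (hC22 : C ≠ 22) (a : ℕ → ℚ)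
    (h0 : a 0 = 1) (h : SolvesODE C a) :
    a 2 - 1 - a 1 =
      5 * (5 * C + 22) * (C - 1) * (C + 2)^2 / (2 * (C - 22) * (C - 10)) := by
  have hden : 2 * (C - 22) * (C - 10) ≠ 0 :=
    mul_ne_zero (mul_ne_zero two_ne_zero (sub_ne_zero.2 hC22)) (sub_ne_zero.2 hC10)
  have h1 := h.sub_mul_coeff_one
  have h2 := h.sub_mul_coeff_two
  rw [h0] at h1 h2
  rw [eq_div_iff hden]
  linear_combination (5 * C^2 + 24 * C - 92) * h1 - 2 * (C - 10) * h2
end
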